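/- arXiv:1502.06221 — 3 statements merged into one kernel-verified Lean document; each statement's English description precedes it below -/
import Mathlib

section
/- For every real number d with |d| < 1, one has the upper bound 1 - H((1+d)/2) ≤ d² / (2·(log 2)·(1 - d²)). -/
/-- Binary entropy function (base-2 logarithm), with the convention `0 * log 0 = 0`
(which holds automatically since `Real.logb 2 0 = 0`). -/
noncomputable def binH (p : ℝ) : ℝ := -p * Real.logb 2 p - (1 - p) * Real.logb 2 (1 - p)

/-!
With `f d = (1 + d) log (1 + d) + (1 - d) log (1 - d)` one has `1 - H((1 + d)/2) = f d / (2 log 2)`.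
Writing `f d = log (1 - d²) + d (log (1 + d) - log (1 - d))` and expanding both logarithms gives
`f d = ∑ₖ d^(2k+2) / ((2k+1)(k+1))`, which is termwise at most the geometric series
`∑ₖ d^(2k+2) = d² / (1 - d²)`.
-/

open Real

lemma div_two_mul_logb_div_two (x : ℝ) :
    x / 2 * logb 2 (x / 2) = x * log x / (2 * log 2) - x / 2 := by
  rcases eq_or_ne x 0 with rfl | hx
  · simp
  · rw [logb, log_div hx two_ne_zero]
    field_simp

lemma one_sub_binH_one_add_div_two (d : ℝ) :
    1 - binH ((1 + d) / 2) = ((1 + d) * log (1 + d) + (1 - d) * log (1 - d)) / (2 * log 2) := by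
  rw [binH, show 1 - (1 + d) / 2 = (1 - d) / 2 by ring, neg_mul, div_two_mul_logb_div_two,
    div_two_mul_logb_div_two]
  ring

lemma abs_sq_lt_one {d : ℝ} (hd : |d| < 1) : |d ^ 2| < 1 := by
  rwa [abs_sq, sq_lt_one_iff_abs_lt_one]

lemma hasSum_one_add_mul_log_add_one_sub_mul_log {d : ℝ} (hd : |d| < 1) :
    HasSum (fun k : ℕ => (d ^ 2) ^ (k + 1) / ((2 * k + 1) * (k + 1)))
      ((1 + d) * log (1 + d) + (1 - d) * log (1 - d)) := by
  obtain ⟨hd₁, hd₂⟩ := abs_lt.mp hd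
  have hlog : log (1 - d ^ 2) = log (1 + d) + log (1 - d) := by
    rw [← log_mul (by linarith) (by linarith)]
    ring_nf
  have hsum := ((hasSum_log_sub_log_of_abs_lt_one hd).mul_left d).sub
    (hasSum_pow_div_log_of_abs_lt_one (abs_sq_lt_one hd))
  rw [show (1 + d) * log (1 + d) + (1 - d) * log (1 - d)
      = d * (log (1 + d) - log (1 - d)) - -log (1 - d ^ 2) by rw [hlog]; ring]
  refine hsum.congr_fun fun k => ?_
  rw [show (d ^ 2) ^ (k + 1) = d * d ^ (2 * k + 1) by ring]
  field_simp
  ring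

lemma one_add_mul_log_add_one_sub_mul_log_le {d : ℝ} (hd : |d| < 1) :
    (1 + d) * log (1 + d) + (1 - d) * log (1 - d) ≤ d ^ 2 / (1 - d ^ 2) := by
  have hgeom : HasSum (fun k : ℕ => (d ^ 2) ^ (k + 1)) (d ^ 2 / (1 - d ^ 2)) :=
    ((hasSum_geometric_of_abs_lt_one (abs_sq_lt_one hd)).mul_left (d ^ 2)).congr_fun
      fun k => pow_succ' _ _
  refine hasSum_le (fun k => div_le_self (by positivity) ?_)
    (hasSum_one_add_mul_log_add_one_sub_mul_log hd) hgeom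
  have hk : (1 : ℝ) ≤ k + 1 := by simp
  nlinarith

/-- For every real `d` with `|d| < 1`, `1 - H((1+d)/2) ≤ d² / (2 (log 2) (1 - d²))`. -/
theorem one_sub_binH_le (d : ℝ) (hd : |d| < 1) :
    1 - binH ((1 + d) / 2) ≤ d ^ 2 / (2 * Real.log 2 * (1 - d ^ 2)) := by
  rw [one_sub_binH_one_add_div_two, mul_comm _ (1 - d ^ 2), ← div_div (d ^ 2)]
  exact div_le_div_of_nonneg_right (one_add_mul_log_add_one_sub_mul_log_le hd)
    (mul_pos two_pos (log_pos one_lt_two)).le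
end

section
/- (Capacity of the extremal non-symmetric binary channel.) For d ≠ 0 with |d| < 1, define the channel capacity C(d) = sup_{p₀ ∈ [0,1]} ( H((1 + p₀·d)/2) - p₀·H((1-d)/2) + p₀ - 1 ). Then lim_{d → 0, d ≠ 0} C(d)/d² = 1/(8 log 2). In particular, the capacity of the non-symmetric binary channel with crossover probabilities (1-d)/2 and 1/2 is approximately d²/(8 log 2) bits per transmission for small d. -/
open Filter

/-- Auxiliary: `φ(x) = (1+x)·log(1+x) + (1-x)·log(1-x)`. -/
noncomputable def phiE (x : ℝ) : ℝ := (1+x) * Real.log (1+x) + (1-x) * Real.log (1-x)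

lemma log_taylor (x : ℝ) (hx : |x| ≤ 1/2) :
    |Real.log (1 - x) + (x + x^2/2)| ≤ 2 * |x|^3 := by
  have h1 : |x| < 1 := lt_of_le_of_lt hx (by norm_num)
  have h := Real.abs_log_sub_add_sum_range_le h1 2
  have hs : ∑ i ∈ Finset.range 2, x ^ (i + 1) / (↑i + 1) = x + x^2/2 := by
    norm_num [Finset.sum_range_succ]
  rw [hs] at h
  have h2 : |x|^3 / (1 - |x|) ≤ 2 * |x|^3 := by
    rw [div_le_iff₀ (by linarith)]
    nlinarith [abs_nonneg x, pow_nonneg (abs_nonneg x) 3]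
  calc |Real.log (1 - x) + (x + x^2/2)| = |x + x^2/2 + Real.log (1-x)| := by ring_nf
    _ ≤ |x|^3 / (1 - |x|) := h
    _ ≤ 2 * |x|^3 := h2

lemma phiE_approx (x : ℝ) (hx : |x| ≤ 1/2) : |phiE x - x^2| ≤ 6 * |x|^3 := by
  have hx' : |(-x)| ≤ 1/2 := by rwa [abs_neg]
  have h1 := log_taylor x hx
  have h2 := log_taylor (-x) hx'
  rw [sub_neg_eq_add, abs_neg] at h2
  have hb := abs_le.1 h1
  have ha := abs_le.1 h2
  have hxb := abs_le.1 hx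
  have key : phiE x - x^2 =
      (1+x) * (Real.log (1+x) + (-x + (-x)^2/2)) + (1-x) * (Real.log (1-x) + (x + x^2/2)) := by
    unfold phiE; ring
  rw [key, abs_le]
  have h3 : (0:ℝ) ≤ |x|^3 := pow_nonneg (abs_nonneg x) 3
  constructor <;> nlinarith [ha.1, ha.2, hb.1, hb.2, hxb.1, hxb.2]

lemma binH_eq (x : ℝ) (h1 : -1 < x) (h2 : x < 1) :
    binH ((1+x)/2) = 1 - phiE x / (2 * Real.log 2) := by
  have hx1 : (0:ℝ) < 1 + x := by linarith
  have hx2 : (0:ℝ) < 1 - x := by linarith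
  have hl2 : Real.log 2 ≠ 0 := ne_of_gt (Real.log_pos one_lt_two)
  have e1 : 1 - (1+x)/2 = (1-x)/2 := by ring
  unfold binH phiE
  rw [e1, Real.logb, Real.logb, Real.log_div (ne_of_gt hx1) two_ne_zero,
      Real.log_div (ne_of_gt hx2) two_ne_zero]
  field_simp
  ring

lemma phiE_neg (x : ℝ) : phiE (-x) = phiE x := by
  unfold phiE
  rw [sub_neg_eq_add, ← sub_eq_add_neg]
  ring

lemma f_eq (d p : ℝ) (hd : |d| < 1) (hp0 : 0 ≤ p) (hp1 : p ≤ 1) :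
    binH ((1 + p * d) / 2) - p * binH ((1 - d) / 2) + p - 1
      = (p * phiE d - phiE (p * d)) / (2 * Real.log 2) := by
  have hd' := abs_lt.1 hd
  have hpd : |p * d| < 1 := by
    rw [abs_mul, abs_of_nonneg hp0]
    calc p * |d| ≤ 1 * |d| := by nlinarith [abs_nonneg d]
      _ < 1 := by simpa using hd
  have hpd' := abs_lt.1 hpd
  have e2 : (1 - d)/2 = (1 + (-d))/2 := by ring
  rw [e2, binH_eq (p*d) hpd'.1 hpd'.2, binH_eq (-d) (by linarith) (by linarith), phiE_neg]
  have hl2 : Real.log 2 ≠ 0 := ne_of_gt (Real.log_pos one_lt_two)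
  field_simp
  ring

set_option maxHeartbeats 2000000 in
/-- Capacity of the extremal non-symmetric binary channel with crossover probabilities
`(1-d)/2` and `1/2`: for the capacity
`C(d) = sup_{p₀ ∈ [0,1]} (H((1 + p₀·d)/2) - p₀·H((1-d)/2) + p₀ - 1)`, one has
`lim_{d → 0, d ≠ 0} C(d)/d² = 1/(8 log 2)`. -/
theorem extremal_nonsymmetric_channel_capacity :
    Tendsto
      (fun d : ℝ =>
        (⨆ p₀ : Set.Icc (0 : ℝ) 1,
          (binH ((1 + (p₀ : ℝ) * d) / 2) - (p₀ : ℝ) * binH ((1 - d) / 2) + (p₀ : ℝ) - 1))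
        / d ^ 2)
      (nhdsWithin 0 {0}ᶜ) (nhds (1 / (8 * Real.log 2))) := by
  have hL2 : (0:ℝ) < Real.log 2 := Real.log_pos one_lt_two
  have hL2' : (1:ℝ)/2 ≤ Real.log 2 := by
    have := Real.log_two_gt_d9; linarith
  haveI : Nonempty (Set.Icc (0:ℝ) 1) := ⟨⟨0, by norm_num⟩⟩
  have key : ∀ d : ℝ, d ≠ 0 → |d| ≤ 1/2 →
      |(⨆ p₀ : Set.Icc (0 : ℝ) 1,
          (binH ((1 + (p₀ : ℝ) * d) / 2) - (p₀ : ℝ) * binH ((1 - d) / 2) + (p₀ : ℝ) - 1))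
        / d ^ 2 - 1 / (8 * Real.log 2)| ≤ 12 * |d| := by
    intro d hd0 hd2
    have hd1 : |d| < 1 := lt_of_le_of_lt hd2 (by norm_num)
    have hdsq : (0:ℝ) < d^2 := by positivity
    have habs : (0:ℝ) < |d| := abs_pos.2 hd0
    have hcube : |d|^3 = |d| * d^2 := by rw [← sq_abs]; ring
    set F : Set.Icc (0:ℝ) 1 → ℝ := fun p₀ =>
      binH ((1 + (p₀ : ℝ) * d) / 2) - (p₀ : ℝ) * binH ((1 - d) / 2) + (p₀ : ℝ) - 1 with hF
    have hFeq : ∀ p : Set.Icc (0:ℝ) 1,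
        F p = ((p:ℝ) * phiE d - phiE ((p:ℝ) * d)) / (2 * Real.log 2) := fun p =>
      f_eq d p hd1 p.2.1 p.2.2
    have hphid := abs_le.1 (phiE_approx d hd2)
    -- pointwise upper bound
    have hub : ∀ p : Set.Icc (0:ℝ) 1, F p ≤ (d^2/4 + 12*|d|^3) / (2 * Real.log 2) := by
      intro p
      rw [hFeq p]
      have hp0 : (0:ℝ) ≤ p := p.2.1
      have hp1 : (p:ℝ) ≤ 1 := p.2.2
      have hpabs : |(p:ℝ)*d| = (p:ℝ) * |d| := by rw [abs_mul, abs_of_nonneg hp0]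
      have hpd2 : |(p:ℝ)*d| ≤ 1/2 := by rw [hpabs]; nlinarith
      have hc := abs_le.1 (phiE_approx ((p:ℝ)*d) hpd2)
      rw [hpabs] at hc
      gcongr ?_ / _
      have hA : (p:ℝ) * phiE d ≤ (p:ℝ)*d^2 + 6*(p:ℝ)*|d|^3 := by
        nlinarith [mul_le_mul_of_nonneg_left hphid.2 hp0]
      have hC : (p:ℝ)*|d|^3 ≤ |d|^3 := by
        nlinarith [pow_nonneg (abs_nonneg d) 3]
      have hD : ((p:ℝ)*|d|)^3 ≤ |d|^3 := by
        have : (p:ℝ)*|d| ≤ |d| := by nlinarith [abs_nonneg d]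
        exact pow_le_pow_left₀ (by positivity) this 3
      have hE : ((p:ℝ) - (p:ℝ)^2)*d^2 ≤ d^2/4 := by
        nlinarith [mul_nonneg (sq_nonneg ((p:ℝ)-1/2)) hdsq.le]
      nlinarith [hc.1, hA, hC, hD, hE, sq_abs d]
    have hbdd : BddAbove (Set.range F) := by
      refine ⟨(d^2/4 + 12*|d|^3) / (2 * Real.log 2), ?_⟩
      rintro _ ⟨p, rfl⟩; exact hub p
    have hS1 : (⨆ p₀, F p₀) ≤ (d^2/4 + 12*|d|^3) / (2 * Real.log 2) := ciSup_le hub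
    have hlbpt : (d^2/4 - 4*|d|^3) / (2 * Real.log 2) ≤ F ⟨1/2, by norm_num⟩ := by
      rw [hFeq]
      have hhd2 : |(1/2:ℝ)*d| ≤ 1/2 := by
        rw [abs_mul, abs_of_nonneg (by norm_num : (0:ℝ) ≤ (1/2:ℝ))]
        nlinarith
      have hc := abs_le.1 (phiE_approx ((1/2:ℝ)*d) hhd2)
      rw [abs_mul, abs_of_nonneg (by norm_num : (0:ℝ) ≤ (1/2:ℝ))] at hc
      show (d^2/4 - 4*|d|^3)/(2*Real.log 2) ≤ ((1/2:ℝ) * phiE d - phiE ((1/2:ℝ)*d))/(2*Real.log 2)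
      gcongr ?_ / _
      nlinarith [hphid.1, hc.2, pow_nonneg (abs_nonneg d) 3]
    have hS2 : (d^2/4 - 4*|d|^3) / (2 * Real.log 2) ≤ ⨆ p₀, F p₀ :=
      le_trans hlbpt (le_ciSup hbdd _)
    have hq1 : (d^2/4 + 12*|d|^3)/(2*Real.log 2)/d^2
        = 1/(8*Real.log 2) + 6*|d|/Real.log 2 := by
      rw [hcube]; field_simp; ring
    have hq2 : (d^2/4 - 4*|d|^3)/(2*Real.log 2)/d^2
        = 1/(8*Real.log 2) - 2*|d|/Real.log 2 := by
      rw [hcube]; field_simp; ring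
    have h6 : 6*|d|/Real.log 2 ≤ 12*|d| := by
      rw [div_le_iff₀ hL2]; nlinarith
    have h7 : 2*|d|/Real.log 2 ≤ 12*|d| := by
      rw [div_le_iff₀ hL2]; nlinarith
    have h8 : (0:ℝ) ≤ 2*|d|/Real.log 2 := by positivity
    have h9 : (0:ℝ) ≤ 6*|d|/Real.log 2 := by positivity
    have hup : (⨆ p₀, F p₀)/d^2 ≤ (d^2/4 + 12*|d|^3)/(2*Real.log 2)/d^2 := by
      gcongr
    have hlo : (d^2/4 - 4*|d|^3)/(2*Real.log 2)/d^2 ≤ (⨆ p₀, F p₀)/d^2 := by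
      gcongr
    rw [hq1] at hup
    rw [hq2] at hlo
    rw [abs_le]
    constructor <;> linarith
  -- squeeze
  rw [Metric.tendsto_nhdsWithin_nhds]
  intro ε hε
  refine ⟨min (1/2) (ε/12), by positivity, fun d hd hdist => ?_⟩
  have hd0 : d ≠ 0 := hd
  rw [Real.dist_eq, sub_zero] at hdist
  have h1 : |d| ≤ 1/2 := le_of_lt (lt_of_lt_of_le hdist (min_le_left _ _))
  have h2 : |d| < ε/12 := lt_of_lt_of_le hdist (min_le_right _ _)
  have := key d hd0 h1
  rw [Real.dist_eq]
  calc |_ - 1/(8*Real.log 2)| ≤ 12 * |d| := this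
    _ < ε := by linarith
end

section
/- For the input distribution p₀ = 1/2, the mutual information of the extremal non-symmetric binary channel satisfies lim_{d → 0, d ≠ 0} ( H((1 + d/2)/2) - (1/2)·H((1-d)/2) - 1/2 ) / d² = 1/(8 log 2). -/
open Filter

/-- `log(1+x)/x → 1` as `x → 0`, `x ≠ 0`. -/
lemma log_one_add_div_self_tendsto :
    Tendsto (fun x : ℝ => Real.log (1 + x) / x) (nhdsWithin 0 {0}ᶜ) (nhds 1) := by
  have h := Real.hasDerivAt_log one_ne_zero
  rw [hasDerivAt_iff_tendsto_slope] at h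
  have hmap : Tendsto (fun x : ℝ => 1 + x) (nhdsWithin 0 {0}ᶜ) (nhdsWithin 1 {1}ᶜ) := by
    apply tendsto_nhdsWithin_of_tendsto_nhds_of_eventually_within
    · exact ((continuous_const.add continuous_id).tendsto' 0 1 (by simp)).mono_left
        nhdsWithin_le_nhds
    · filter_upwards [self_mem_nhdsWithin] with x hx
      simp only [Set.mem_compl_iff, Set.mem_singleton_iff] at hx ⊢
      intro hc; apply hx; linarith
  have h2 := h.comp hmap
  simp only [inv_one] at h2
  refine h2.congr (fun x => ?_)
  simp [slope, Function.comp]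
  ring

/-- `((1+x)log(1+x) + (1-x)log(1-x))/x² → 1` as `x → 0`, `x ≠ 0`. -/
lemma phi_div_sq_tendsto :
    Tendsto (fun x : ℝ =>
        ((1 + x) * Real.log (1 + x) + (1 - x) * Real.log (1 - x)) / x ^ 2)
      (nhdsWithin 0 {0}ᶜ) (nhds 1) := by
  have key := log_one_add_div_self_tendsto
  -- T2 : log(1-x)/x → -1
  have hneg : Tendsto (fun x : ℝ => -x) (nhdsWithin 0 {0}ᶜ) (nhdsWithin 0 {0}ᶜ) := by
    apply tendsto_nhdsWithin_of_tendsto_nhds_of_eventually_within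
    · exact continuous_neg.tendsto' 0 0 (by simp) |>.mono_left nhdsWithin_le_nhds
    · filter_upwards [self_mem_nhdsWithin] with x hx
      simp only [Set.mem_compl_iff, Set.mem_singleton_iff] at hx ⊢
      simpa using hx
  have T2 : Tendsto (fun x : ℝ => Real.log (1 - x) / x) (nhdsWithin 0 {0}ᶜ) (nhds (-1)) := by
    have := (key.comp hneg).neg
    simp only [Function.comp] at this
    refine this.congr fun x => ?_
    rw [div_neg, neg_neg, show (1:ℝ) + -x = 1 - x by ring]
  -- T3 : log(1-x²)/x² → -1
  have hsq : Tendsto (fun x : ℝ => -x ^ 2) (nhdsWithin 0 {0}ᶜ) (nhdsWithin 0 {0}ᶜ) := by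
    apply tendsto_nhdsWithin_of_tendsto_nhds_of_eventually_within
    · exact (continuous_pow 2).neg.tendsto' 0 0 (by simp) |>.mono_left nhdsWithin_le_nhds
    · filter_upwards [self_mem_nhdsWithin] with x hx
      simp only [Set.mem_compl_iff, Set.mem_singleton_iff] at hx ⊢
      intro hc; apply hx
      have : x ^ 2 = 0 := by linarith
      exact pow_eq_zero_iff (by norm_num) |>.mp this
  have T3 : Tendsto (fun x : ℝ => Real.log (1 - x ^ 2) / x ^ 2)
      (nhdsWithin 0 {0}ᶜ) (nhds (-1)) := by
    have := (key.comp hsq).neg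
    simp only [Function.comp] at this
    refine this.congr fun x => ?_
    rw [div_neg, neg_neg, show (1:ℝ) + -x ^ 2 = 1 - x ^ 2 by ring]
  have comb := (key.sub T2).add T3
  norm_num at comb
  refine comb.congr' ?_
  have hmem : Set.Ioo (-1 : ℝ) 1 ∈ nhdsWithin (0:ℝ) {0}ᶜ :=
    nhdsWithin_le_nhds (Ioo_mem_nhds (by norm_num) (by norm_num))
  filter_upwards [hmem, self_mem_nhdsWithin] with x hx hx0
  simp only [Set.mem_compl_iff, Set.mem_singleton_iff] at hx0
  have h1 : (0:ℝ) < 1 + x := by linarith [hx.1]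
  have h2 : (0:ℝ) < 1 - x := by linarith [hx.2]
  have hlog : Real.log (1 - x ^ 2) = Real.log (1 + x) + Real.log (1 - x) := by
    rw [show (1 : ℝ) - x ^ 2 = (1 + x) * (1 - x) by ring,
      Real.log_mul h1.ne' h2.ne']
  rw [hlog]
  field_simp
  ring

/-- Entropy of `(1+x)/2` in terms of natural logs. -/
lemma binH_half_shift {x : ℝ} (h1 : (0:ℝ) < 1 + x) (h2 : (0:ℝ) < 1 - x) :
    binH ((1 + x) / 2) =
      1 - ((1 + x) * Real.log (1 + x) + (1 - x) * Real.log (1 - x)) / (2 * Real.log 2) := by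
  have hL : Real.log 2 ≠ 0 := (Real.log_pos (by norm_num)).ne'
  unfold binH
  have e1 : 1 - (1 + x) / 2 = (1 - x) / 2 := by ring
  rw [e1, Real.logb, Real.logb,
    Real.log_div h1.ne' two_ne_zero, Real.log_div h2.ne' two_ne_zero]
  field_simp
  ring

/-- For the input distribution `p₀ = 1/2`, the mutual information of the extremal
non-symmetric binary channel satisfies
`lim_{d → 0, d ≠ 0} (H((1 + d/2)/2) - (1/2)·H((1-d)/2) - 1/2) / d² = 1/(8 log 2)`. -/
theorem mutual_information_half_input_limit :
    Tendsto
      (fun d : ℝ =>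
        (binH ((1 + d / 2) / 2) - (1 / 2) * binH ((1 - d) / 2) - 1 / 2) / d ^ 2)
      (nhdsWithin 0 {0}ᶜ) (nhds (1 / (8 * Real.log 2))) := by
  have hL : Real.log 2 ≠ 0 := (Real.log_pos (by norm_num)).ne'
  set A : ℝ → ℝ := fun x =>
    ((1 + x) * Real.log (1 + x) + (1 - x) * Real.log (1 - x)) / x ^ 2 with hA
  have hAlim := phi_div_sq_tendsto
  have hhalf : Tendsto (fun d : ℝ => d / 2) (nhdsWithin 0 {0}ᶜ) (nhdsWithin 0 {0}ᶜ) := by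
    apply tendsto_nhdsWithin_of_tendsto_nhds_of_eventually_within
    · exact (continuous_id.div_const 2).tendsto' 0 0 (by simp) |>.mono_left nhdsWithin_le_nhds
    · filter_upwards [self_mem_nhdsWithin] with x hx
      simp only [Set.mem_compl_iff, Set.mem_singleton_iff] at hx ⊢
      intro hc; apply hx; linarith
  have hAlim2 : Tendsto (fun d : ℝ => A (d / 2)) (nhdsWithin 0 {0}ᶜ) (nhds 1) :=
    hAlim.comp hhalf
  have comb := ((hAlim.const_mul (1 / (4 * Real.log 2))).sub
    (hAlim2.const_mul (1 / (8 * Real.log 2))))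
  have hval : 1 / (4 * Real.log 2) * 1 - 1 / (8 * Real.log 2) * 1 = 1 / (8 * Real.log 2) := by
    field_simp
    ring
  rw [hval] at comb
  refine comb.congr' ?_
  have hmem : Set.Ioo (-1 : ℝ) 1 ∈ nhdsWithin (0:ℝ) {0}ᶜ :=
    nhdsWithin_le_nhds (Ioo_mem_nhds (by norm_num) (by norm_num))
  filter_upwards [hmem, self_mem_nhdsWithin] with d hd hd0
  simp only [Set.mem_compl_iff, Set.mem_singleton_iff] at hd0
  have h1 : (0:ℝ) < 1 + d / 2 := by nlinarith [hd.1, hd.2]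
  have h2 : (0:ℝ) < 1 - d / 2 := by nlinarith [hd.1, hd.2]
  have h3 : (0:ℝ) < 1 + d := by linarith [hd.1]
  have h4 : (0:ℝ) < 1 - d := by linarith [hd.2]
  have e1 := binH_half_shift h1 h2
  have e2 : binH ((1 - d) / 2) =
      1 - ((1 + d) * Real.log (1 + d) + (1 - d) * Real.log (1 - d)) / (2 * Real.log 2) := by
    have := binH_half_shift (x := -d) (by linarith) (by linarith)
    rw [show (1 + -d) / 2 = (1 - d) / 2 by ring] at this
    rw [this]
    rw [show (1:ℝ) + -d = 1 - d by ring, show (1:ℝ) - -d = 1 + d by ring]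
    ring_nf
  rw [hA]
  simp only
  rw [e1, e2]
  have hd2 : d ^ 2 ≠ 0 := pow_ne_zero 2 hd0
  field_simp
  ring
end
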